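/- arXiv:1911.08165 — 4 statements merged into one kernel-verified Lean document; each statement's English description precedes it below -/
import Mathlib

section
/- For the max-min problem max_{q≥0, Σq_j ≤ P_mu} min_j a_j*q_j with all a_j > 0, the optimal value is P_mu / (Σ_j 1/a_j), it is attained with Σ q_j = P_mu, and at any optimal point all the values a_j*q_j are equal. -/
/-! A feasible `q` with `min_j a_j q_j ≥ v` must spend at least `v / a_j` on every group,
hence `v ∑_j 1/a_j ≤ ∑_j q_j ≤ P`. The allocation `q_j = (P / ∑_i 1/a_i) / a_j` attains this
bound with equality, and equality in the summed bound forces `q_j = v / a_j` termwise. -/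

open Finset

section
variable {ι : Type*} {s : Finset ι} {a q : ι → ℝ} {v : ℝ}

lemma mul_sum_inv_le_sum (ha : ∀ j ∈ s, 0 < a j) (h : ∀ j ∈ s, v ≤ a j * q j) :
    v * ∑ j ∈ s, (a j)⁻¹ ≤ ∑ j ∈ s, q j := by
  rw [mul_sum]
  exact sum_le_sum fun j hj => by
    rw [← div_eq_mul_inv, div_le_iff₀' (ha j hj)]
    exact h j hj

lemma mul_eq_of_sum_eq_mul_sum_inv (ha : ∀ j ∈ s, 0 < a j) (h : ∀ j ∈ s, v ≤ a j * q j)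
    (hsum : ∑ j ∈ s, q j = v * ∑ j ∈ s, (a j)⁻¹) : ∀ j ∈ s, a j * q j = v := by
  have hle : ∀ j ∈ s, v / a j ≤ q j := fun j hj => (div_le_iff₀' (ha j hj)).2 (h j hj)
  have heq : ∀ j ∈ s, v / a j = q j := by
    rw [← sum_eq_sum_iff_of_le hle, hsum, mul_sum]
    simp only [div_eq_mul_inv]
  intro j hj
  rw [← heq j hj, mul_div_cancel₀ _ (ha j hj).ne']

noncomputable def equalizingAlloc (s : Finset ι) (a : ι → ℝ) (P : ℝ) (j : ι) : ℝ :=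
  P / (∑ i ∈ s, (a i)⁻¹) / a j

lemma mul_equalizingAlloc {P : ℝ} {j : ι} (ha : a j ≠ 0) :
    a j * equalizingAlloc s a P j = P / ∑ i ∈ s, (a i)⁻¹ :=
  mul_div_cancel₀ _ ha

lemma sum_equalizingAlloc {P : ℝ} (hS : ∑ i ∈ s, (a i)⁻¹ ≠ 0) :
    ∑ j ∈ s, equalizingAlloc s a P j = P := by
  simp only [equalizingAlloc, div_eq_mul_inv _ (a _), ← mul_sum]
  exact div_mul_cancel₀ P hS

lemma equalizingAlloc_nonneg {P : ℝ} (hP : 0 ≤ P) (ha : ∀ i, 0 ≤ a i) (j : ι) :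
    0 ≤ equalizingAlloc s a P j :=
  div_nonneg (div_nonneg hP (sum_nonneg fun i _ => inv_nonneg.2 (ha i))) (ha j)

end

/-- Max-min allocation `max_{q ≥ 0, ∑ q ≤ Pmu} min_j a_j q_j` with all `a_j > 0`:
the optimal value is `Pmu / ∑ 1/a_j`, it is attained with `∑ q = Pmu`, and at any
optimal point all values `a_j q_j` are equal. -/
theorem stmt1 {ι : Type*} [Fintype ι] [Nonempty ι]
    (a : ι → ℝ) (Pmu : ℝ) (ha : ∀ j, 0 < a j) (hPmu : 0 < Pmu) :
    IsGreatest
      {v : ℝ | ∃ q : ι → ℝ, (∀ j, 0 ≤ q j) ∧ (∑ j, q j ≤ Pmu) ∧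
        v = Finset.univ.inf' Finset.univ_nonempty (fun j => a j * q j)}
      (Pmu / ∑ j, (a j)⁻¹) ∧
    (∃ q : ι → ℝ, (∀ j, 0 ≤ q j) ∧ (∑ j, q j = Pmu) ∧
      Finset.univ.inf' Finset.univ_nonempty (fun j => a j * q j) = Pmu / ∑ j, (a j)⁻¹) ∧
    (∀ q : ι → ℝ, (∀ j, 0 ≤ q j) → (∑ j, q j ≤ Pmu) →
      Finset.univ.inf' Finset.univ_nonempty (fun j => a j * q j) = Pmu / ∑ j, (a j)⁻¹ →
      (∑ j, q j = Pmu) ∧ ∀ i j, a i * q i = a j * q j) := by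
  set S := ∑ j, (a j)⁻¹
  have hS : 0 < S := sum_pos (fun j _ => inv_pos.2 (ha j)) univ_nonempty
  have ha' : ∀ j ∈ univ, 0 < a j := fun j _ => ha j
  have hmin : ∀ (q : ι → ℝ), ∀ j ∈ univ, univ.inf' univ_nonempty (fun j => a j * q j) ≤ a j * q j :=
    fun q j hj => inf'_le _ hj
  have hub : ∀ q : ι → ℝ, ∑ j, q j ≤ Pmu → univ.inf' univ_nonempty (fun j => a j * q j) ≤ Pmu / S :=
    fun q hq => (le_div_iff₀ hS).2 ((mul_sum_inv_le_sum ha' (hmin q)).trans hq)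
  set q₀ := equalizingAlloc univ a Pmu
  have hq₀nn : ∀ j, 0 ≤ q₀ j := equalizingAlloc_nonneg hPmu.le fun j => (ha j).le
  have hq₀sum : ∑ j, q₀ j = Pmu := sum_equalizingAlloc hS.ne'
  have hq₀val : univ.inf' univ_nonempty (fun j => a j * q₀ j) = Pmu / S := by
    simp only [q₀, S, mul_equalizingAlloc (ha _).ne', inf'_const]
  refine ⟨⟨⟨q₀, hq₀nn, hq₀sum.le, hq₀val.symm⟩, ?_⟩, ⟨q₀, hq₀nn, hq₀sum, hq₀val⟩, ?_⟩
  · rintro v ⟨q, -, hq, rfl⟩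
    exact hub q hq
  · intro q _ hq hval
    have hcS : Pmu / S * S = Pmu := div_mul_cancel₀ Pmu hS.ne'
    have hbound := hval ▸ hmin q
    have hsum : ∑ j, q j = Pmu := le_antisymm hq (hcS ▸ mul_sum_inv_le_sum ha' hbound)
    have hequal := mul_eq_of_sum_eq_mul_sum_inv ha' hbound (hsum.trans hcS.symm)
    exact ⟨hsum, fun i j => (hequal i (mem_univ i)).trans (hequal j (mem_univ j)).symm⟩
end

section
/- Let f, g: [0,P] → ℝ be continuous with f strictly increasing, g strictly increasing, f(0)=g(0)=0. Let S = {(u,v) : ∃ s,t ≥ 0, s+t ≤ P, 0 ≤ u ≤ f(s), 0 ≤ v ≤ g(t)}. Then the set of strong Pareto optimal points of S (points (u,v) ∈ S such that no (u',v') ∈ S satisfies u' ≥ u, v' ≥ v with at least one strict inequality) is exactly {(f(s), g(P - s)) : s ∈ [0, P]}. -/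
/-! Strong Pareto optimality in `S` is maximality for the product order on `ℝ × ℝ`. The set `S`
contains `A = {(f s, g t) : s, t ≥ 0, s + t ≤ P}` and lies below it, so both have the same
maximal elements. On the triangle of power splits, `(s, t) ↦ (f s, g t)` is an order embedding,
so the maximal elements of `A` are the images of the maximal points of the triangle, which form
its hypotenuse `s + t = P`. -/

open Set

theorem Prod.maximal_mem_iff {α β : Type*} [Preorder α] [Preorder β] {S : Set (α × β)}
    {x : α × β} :
    Maximal (· ∈ S) x ↔
      x ∈ S ∧ ¬∃ y ∈ S, x.1 ≤ y.1 ∧ x.2 ≤ y.2 ∧ (x.1 < y.1 ∨ x.2 < y.2) := by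
  rw [maximal_iff_forall_gt]
  refine and_congr_right fun _ ↦ ⟨fun h ⟨y, hyS, h₁, h₂, hlt⟩ ↦ h (Prod.lt_iff.2 ?_) hyS,
    fun h y hxy hyS ↦ h ⟨y, hyS, hxy.le.1, hxy.le.2, ?_⟩⟩
  · exact hlt.imp (⟨·, h₂⟩) (⟨h₁, ·⟩)
  · exact (Prod.lt_iff.1 hxy).imp (·.1) (·.2)

theorem maximal_mem_iff_of_subset_of_subset_lowerClosure {α : Type*} [PartialOrder α]
    {A S : Set α} (hAS : A ⊆ S) (hSA : S ⊆ lowerClosure A) {x : α} :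
    Maximal (· ∈ S) x ↔ Maximal (· ∈ A) x := by
  refine ⟨fun h ↦ ?_, fun h ↦ ⟨hAS h.prop, fun y hy hxy ↦ ?_⟩⟩
  · obtain ⟨a, ha, hxa⟩ := hSA h.prop
    obtain rfl := h.eq_of_le (hAS ha) hxa
    exact h.mono hAS ha
  · obtain ⟨a, ha, hya⟩ := hSA hy
    exact hya.trans (h.le_of_ge ha (hxy.trans hya))

theorem StrictMonoOn.prodMap_le_prodMap_iff {α β γ δ : Type*} [LinearOrder α] [Preorder β]
    [LinearOrder γ] [Preorder δ] {f : α → β} {g : γ → δ} {s : Set α} {t : Set γ}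
    (hf : StrictMonoOn f s) (hg : StrictMonoOn g t) {x y : α × γ} (hx : x ∈ s ×ˢ t)
    (hy : y ∈ s ×ˢ t) : Prod.map f g x ≤ Prod.map f g y ↔ x ≤ y :=
  and_congr (hf.le_iff_le hx.1 hy.1) (hg.le_iff_le hx.2 hy.2)

section BudgetTriangle

variable {𝕜 : Type*} [Field 𝕜] [LinearOrder 𝕜]

def budgetTriangle (P : 𝕜) : Set (𝕜 × 𝕜) :=
  {p | 0 ≤ p.1 ∧ 0 ≤ p.2 ∧ p.1 + p.2 ≤ P}

theorem budgetTriangle_subset_Icc_prod_Icc [IsStrictOrderedRing 𝕜] (P : 𝕜) :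
    budgetTriangle P ⊆ Icc 0 P ×ˢ Icc 0 P :=
  fun _ ⟨h₁, h₂, hsum⟩ ↦ ⟨⟨h₁, by linarith⟩, ⟨h₂, by linarith⟩⟩

theorem setOf_maximal_mem_budgetTriangle [IsStrictOrderedRing 𝕜] (P : 𝕜) :
    {p | Maximal (· ∈ budgetTriangle P) p} = (fun s ↦ (s, P - s)) '' Icc 0 P := by
  ext ⟨s, t⟩
  simp only [mem_image, mem_Icc, Prod.mk.injEq]
  constructor
  · intro h
    obtain ⟨hs, ht, hsum⟩ := h.prop
    have : P - t ≤ s := (h.le_of_ge (y := (P - t, t)) ⟨by linarith, ht, by linarith⟩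
      ⟨by linarith, le_rfl⟩).1
    exact ⟨s, ⟨hs, by linarith⟩, rfl, by linarith⟩
  · rintro ⟨s, ⟨hs, hsP⟩, rfl, rfl⟩
    refine ⟨⟨hs, by linarith, by linarith⟩, fun q ⟨_, _, hq⟩ ⟨h₁, h₂⟩ ↦ ⟨?_, ?_⟩⟩ <;>
      dsimp only at h₁ h₂ ⊢ <;> linarith

end BudgetTriangle

theorem stmt8_general (P : ℝ) (f g : ℝ → ℝ)
    (hfm : StrictMonoOn f (Set.Icc 0 P)) (hgm : StrictMonoOn g (Set.Icc 0 P))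
    (hf0 : f 0 = 0) (hg0 : g 0 = 0)
    (S : Set (ℝ × ℝ))
    (hS : S = {uv : ℝ × ℝ | ∃ s t : ℝ, 0 ≤ s ∧ 0 ≤ t ∧ s + t ≤ P ∧
      0 ≤ uv.1 ∧ uv.1 ≤ f s ∧ 0 ≤ uv.2 ∧ uv.2 ≤ g t}) :
    {uv : ℝ × ℝ | uv ∈ S ∧ ¬∃ uv' ∈ S,
        uv.1 ≤ uv'.1 ∧ uv.2 ≤ uv'.2 ∧ (uv.1 < uv'.1 ∨ uv.2 < uv'.2)}
      = (fun s => (f s, g (P - s))) '' Set.Icc 0 P := by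
  have hT := budgetTriangle_subset_Icc_prod_Icc P
  have hTS : Prod.map f g '' budgetTriangle P ⊆ S := by
    rintro _ ⟨⟨s, t⟩, hst, rfl⟩
    obtain ⟨hs, ht⟩ := hT hst
    have h0 : (0 : ℝ) ∈ Icc 0 P := ⟨le_rfl, hs.1.trans hs.2⟩
    rw [hS]
    exact ⟨s, t, hst.1, hst.2.1, hst.2.2, hf0 ▸ hfm.monotoneOn h0 hs hs.1, le_rfl,
      hg0 ▸ hgm.monotoneOn h0 ht ht.1, le_rfl⟩
  have hST : S ⊆ lowerClosure (Prod.map f g '' budgetTriangle P) := by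
    rw [hS]
    rintro uv ⟨s, t, hs, ht, hst, -, hu, -, hv⟩
    exact ⟨(f s, g t), ⟨(s, t), ⟨hs, ht, hst⟩, rfl⟩, hu, hv⟩
  calc _ = {x | Maximal (· ∈ S) x} := by ext; exact Prod.maximal_mem_iff.symm
    _ = {x | Maximal (· ∈ Prod.map f g '' budgetTriangle P) x} := by
      ext; exact maximal_mem_iff_of_subset_of_subset_lowerClosure hTS hST
    _ = Prod.map f g '' {p | Maximal (· ∈ budgetTriangle P) p} :=
      (image_monotone_setOfPred_maximal_mem fun _ _ hx hy ↦
        hfm.prodMap_le_prodMap_iff hgm (hT hx) (hT hy)).symm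
    _ = _ := by rw [setOf_maximal_mem_budgetTriangle, image_image]; rfl

/-- Strong Pareto boundary characterization: with `f, g` continuous and strictly
increasing on `[0,P]`, `f 0 = g 0 = 0`, and
`S = {(u,v) : ∃ s t ≥ 0, s+t ≤ P, 0 ≤ u ≤ f s, 0 ≤ v ≤ g t}`, the strong Pareto
optimal points of `S` are exactly `{(f s, g (P-s)) : s ∈ [0,P]}`. -/
theorem stmt8 (P : ℝ) (hP : 0 < P) (f g : ℝ → ℝ)
    (hfc : ContinuousOn f (Set.Icc 0 P)) (hgc : ContinuousOn g (Set.Icc 0 P))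
    (hfm : StrictMonoOn f (Set.Icc 0 P)) (hgm : StrictMonoOn g (Set.Icc 0 P))
    (hf0 : f 0 = 0) (hg0 : g 0 = 0)
    (S : Set (ℝ × ℝ))
    (hS : S = {uv : ℝ × ℝ | ∃ s t : ℝ, 0 ≤ s ∧ 0 ≤ t ∧ s + t ≤ P ∧
      0 ≤ uv.1 ∧ uv.1 ≤ f s ∧ 0 ≤ uv.2 ∧ uv.2 ≤ g t}) :
    {uv : ℝ × ℝ | uv ∈ S ∧ ¬∃ uv' ∈ S,
        uv.1 ≤ uv'.1 ∧ uv.2 ≤ uv'.2 ∧ (uv.1 < uv'.1 ∨ uv.2 < uv'.2)}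
      = (fun s => (f s, g (P - s))) '' Set.Icc 0 P :=
  stmt8_general P f g hfm hgm hf0 hg0 S hS
end

section
/- Under the hypotheses of the previous statement (f, g continuous and strictly increasing on [0,P] with f(0)=g(0)=0, S defined as above), S has no weak Pareto optimal points that are not strong Pareto optimal: every point (u,v) ∈ S such that no (u',v') ∈ S has u' > u and v' > v is already a strong Pareto optimal point. -/
/-! Let `(u', v')` dominate `(u, v)` with budgets `s + t ≤ P`, say with `u < f s`. Then `s > 0`
because `f 0 = 0 ≤ u`, and by left continuity of `f` at `s` a little power can be moved from `s`
to `t` while keeping `u < f s'`; strict monotonicity of `g` then gives `v ≤ g t < g t'`, so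
`(f s', g t')` beats `(u, v)` strictly in both coordinates. -/

open Set Filter Topology

lemma exists_mem_Ico_lt_of_continuousWithinAt {f : ℝ → ℝ} {a b u : ℝ} (hab : a < b)
    (hf : ContinuousWithinAt f (Ico a b) b) (hu : u < f b) :
    ∃ x ∈ Ico a b, u < f x := by
  have : (𝓝[Ico a b] b).NeBot :=
    mem_closure_iff_nhdsWithin_neBot.mp (by simp [closure_Ico hab.ne, hab.le])
  exact (eventually_mem_nhdsWithin.and (hf.eventually (eventually_gt_nhds hu))).exists

lemma exists_reallocation_lt_lt {P s t u v : ℝ} {f g : ℝ → ℝ}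
    (hfc : ContinuousOn f (Icc 0 P)) (hgm : StrictMonoOn g (Icc 0 P))
    (hs : 0 < s) (ht : 0 ≤ t) (hst : s + t ≤ P) (hu : u < f s) (hv : v ≤ g t) :
    ∃ s' t', 0 ≤ s' ∧ 0 ≤ t' ∧ s' + t' ≤ P ∧ u < f s' ∧ v < g t' := by
  have hcont : ContinuousWithinAt f (Ico 0 s) s :=
    (hfc s ⟨hs.le, by linarith⟩).mono
      (Ico_subset_Icc_self.trans (Icc_subset_Icc_right (by linarith)))
  obtain ⟨x, ⟨hx0, hxs⟩, hux⟩ := exists_mem_Ico_lt_of_continuousWithinAt hs hcont hu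
  have hgt : g t < g (t + (s - x)) :=
    hgm ⟨ht, by linarith⟩ ⟨by linarith, by linarith⟩ (by linarith)
  exact ⟨x, t + (s - x), hx0, by linarith, by linarith, hux, hv.trans_lt hgt⟩

theorem stmt9_general (P : ℝ) (f g : ℝ → ℝ)
    (hfc : ContinuousOn f (Set.Icc 0 P)) (hgc : ContinuousOn g (Set.Icc 0 P))
    (hfm : StrictMonoOn f (Set.Icc 0 P)) (hgm : StrictMonoOn g (Set.Icc 0 P))
    (hf0 : f 0 = 0) (hg0 : g 0 = 0)
    (S : Set (ℝ × ℝ))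
    (hS : S = {uv : ℝ × ℝ | ∃ s t : ℝ, 0 ≤ s ∧ 0 ≤ t ∧ s + t ≤ P ∧
      0 ≤ uv.1 ∧ uv.1 ≤ f s ∧ 0 ≤ uv.2 ∧ uv.2 ≤ g t}) :
    ∀ uv ∈ S, (¬∃ uv' ∈ S, uv.1 < uv'.1 ∧ uv.2 < uv'.2) →
      ¬∃ uv' ∈ S, uv.1 ≤ uv'.1 ∧ uv.2 ≤ uv'.2 ∧ (uv.1 < uv'.1 ∨ uv.2 < uv'.2) := by
  subst hS
  rintro ⟨u, v⟩ ⟨-, -, -, -, -, hu0, -, hv0, -⟩ hweak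
    ⟨⟨u', v'⟩, ⟨s, t, hs, ht, hst, -, hu', -, hv'⟩, hle₁, hle₂, hlt⟩
  dsimp only at *
  suffices ∃ s' t', 0 ≤ s' ∧ 0 ≤ t' ∧ s' + t' ≤ P ∧ u < f s' ∧ v < g t' by
    obtain ⟨s', t', hs', ht', hst', hu, hv⟩ := this
    exact hweak ⟨(f s', g t'),
      ⟨s', t', hs', ht', hst', by linarith, le_rfl, by linarith, le_rfl⟩, hu, hv⟩
  rcases hlt with hlt | hlt
  · have hus : u < f s := hlt.trans_le hu'
    have hs_pos : 0 < s := hs.lt_of_ne (by rintro rfl; linarith)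
    exact exists_reallocation_lt_lt hfc hgm hs_pos ht hst hus (hle₂.trans hv')
  · have hvt : v < g t := hlt.trans_le hv'
    have ht_pos : 0 < t := ht.lt_of_ne (by rintro rfl; linarith)
    obtain ⟨t', s', ht', hs', hts', hv, hu⟩ :=
      exists_reallocation_lt_lt hgc hfm ht_pos hs (by linarith) hvt (hle₁.trans hu')
    exact ⟨s', t', hs', ht', by linarith, hu, hv⟩

/-- No merely-weak Pareto optimal points: under the same hypotheses as the Pareto
boundary characterization, every weak Pareto optimal point of `S` is a strong
Pareto optimal point. -/
theorem stmt9 (P : ℝ) (hP : 0 < P) (f g : ℝ → ℝ)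
    (hfc : ContinuousOn f (Set.Icc 0 P)) (hgc : ContinuousOn g (Set.Icc 0 P))
    (hfm : StrictMonoOn f (Set.Icc 0 P)) (hgm : StrictMonoOn g (Set.Icc 0 P))
    (hf0 : f 0 = 0) (hg0 : g 0 = 0)
    (S : Set (ℝ × ℝ))
    (hS : S = {uv : ℝ × ℝ | ∃ s t : ℝ, 0 ≤ s ∧ 0 ≤ t ∧ s + t ≤ P ∧
      0 ≤ uv.1 ∧ uv.1 ≤ f s ∧ 0 ≤ uv.2 ∧ uv.2 ≤ g t}) :
    ∀ uv ∈ S, (¬∃ uv' ∈ S, uv.1 < uv'.1 ∧ uv.2 < uv'.2) →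
      ¬∃ uv' ∈ S, uv.1 ≤ uv'.1 ∧ uv.2 ≤ uv'.2 ∧ (uv.1 < uv'.1 ∨ uv.2 < uv'.2) :=
  stmt9_general P f g hfc hgc hfm hgm hf0 hg0 S hS
end

section
/- With f(s) = (1-(U+G)/T) log₂(1 + N s / C) for constants N, C > 0, 0 < U+G < T, and g the optimal value function of the weighted water-filling problem with budget P - s, the map s ↦ (f(s), g(P-s)) for s ∈ [0,P] traces a curve such that f(s) is strictly increasing and g(P-s) is strictly decreasing in s; in particular, no two distinct points on this curve dominate each other componentwise. -/
/-!
The multicast objective is a positive multiple of a logarithm of an increasing affine function of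
the multicast power `s`, hence strictly increasing. The unicast value function `g` is strictly
increasing in its budget: extra power `δ > 0` given to any single user of an optimal allocation
strictly raises the objective, so `s ↦ g (P - s)` is strictly decreasing. A strictly increasing and
a strictly decreasing coordinate leave no two distinct points of the curve comparable.
-/

section WaterFilling

variable {ι : Type*} [Fintype ι] (α c : ι → ℝ)

def weightedLogRates (t : ℝ) : Set ℝ :=
  {v | ∃ p : ι → ℝ, (∀ m, 0 ≤ p m) ∧ (∑ m, p m = t) ∧ v = ∑ m, α m * Real.log (1 + c m * p m)}

variable {α c}

theorem sum_mul_log_one_add_mul_lt (hα : ∀ m, 0 < α m) (hc : ∀ m, 0 < c m) {p q : ι → ℝ}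
    (hp : 0 ≤ p) (hpq : p < q) :
    ∑ m, α m * Real.log (1 + c m * p m) < ∑ m, α m * Real.log (1 + c m * q m) := by
  obtain ⟨hle, i, hlt⟩ := Pi.lt_def.mp hpq
  have hpos : ∀ m, 0 < 1 + c m * p m := fun m => by
    linarith [mul_nonneg (hc m).le (hp m)]
  refine Finset.sum_lt_sum (fun m _ => ?_) ⟨i, Finset.mem_univ i, ?_⟩
  · gcongr
    exacts [(hα m).le, hpos m, (hc m).le, hle m]
  · gcongr
    exacts [hα i, hpos i, hc i]

theorem strictMonoOn_of_isGreatest_weightedLogRates (hα : ∀ m, 0 < α m) (hc : ∀ m, 0 < c m)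
    {g : ℝ → ℝ} {S : Set ℝ} (hg : ∀ t ∈ S, IsGreatest (weightedLogRates α c t) (g t)) :
    StrictMonoOn g S := by
  classical
  intro t₁ ht₁ t₂ ht₂ ht
  obtain ⟨p, hp, hp_sum, hp_val⟩ := (hg t₁ ht₁).1
  obtain ⟨q, -, hq_sum, -⟩ := (hg t₂ ht₂).1
  have ht₂_pos : 0 < t₂ := by
    have : 0 ≤ ∑ m, p m := Finset.sum_nonneg fun m _ => hp m
    linarith
  obtain ⟨i, -, -⟩ := Finset.exists_ne_zero_of_sum_ne_zero (hq_sum.trans_ne ht₂_pos.ne')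
  set p' := p + Pi.single i (t₂ - t₁)
  have hpp' : p < p' := lt_add_of_pos_right p (Pi.single_pos.mpr (sub_pos.mpr ht))
  have hp' : ∀ m, 0 ≤ p' m := fun m => (hp m).trans (hpp'.le m)
  have hp'_sum : ∑ m, p' m = t₂ := by
    simp [p', Finset.sum_add_distrib, hp_sum]
  calc g t₁ = ∑ m, α m * Real.log (1 + c m * p m) := hp_val
    _ < ∑ m, α m * Real.log (1 + c m * p' m) := sum_mul_log_one_add_mul_lt hα hc hp hpp'
    _ ≤ g t₂ := (hg t₂ ht₂).2 ⟨p', hp', hp'_sum, rfl⟩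

end WaterFilling

theorem strictMonoOn_mul_logb_one_add_mul_div {b k N C : ℝ} (hb : 1 < b) (hk : 0 < k)
    (hN : 0 < N) (hC : 0 < C) :
    StrictMonoOn (fun s => k * Real.logb b (1 + N * s / C)) (Set.Ici 0) := by
  intro s hs t _ hst
  have hpos : 0 < 1 + N * s / C := by
    have : 0 ≤ N * s / C := div_nonneg (mul_nonneg hN.le hs) hC.le
    linarith
  have : N * s / C < N * t / C := by gcongr
  exact mul_lt_mul_of_pos_left (Real.logb_lt_logb hb hpos (by linarith)) hk

theorem not_le_and_le_of_strictMonoOn_of_strictAntiOn {α β γ : Type*} [LinearOrder α]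
    [Preorder β] [Preorder γ] {f : α → β} {h : α → γ} {S : Set α} (hf : StrictMonoOn f S)
    (hh : StrictAntiOn h S) {s t : α} (hs : s ∈ S) (ht : t ∈ S) (hst : s ≠ t) :
    ¬(f s ≤ f t ∧ h s ≤ h t) := by
  rintro ⟨hf_le, hh_le⟩
  rcases hst.lt_or_gt with hlt | hgt
  · exact (hh hs ht hlt).not_ge hh_le
  · exact (hf ht hs hgt).not_ge hf_le

theorem stmt14_general {U : ℕ} (N C T UG P : ℝ) (α c : Fin U → ℝ)
    (hN : 0 < N) (hC : 0 < C) (hUG : 0 < UG) (hT : UG < T)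
    (hα : ∀ m, 0 < α m) (hc : ∀ m, 0 < c m)
    (f g : ℝ → ℝ)
    (hf : ∀ s, f s = (1 - UG / T) * Real.logb 2 (1 + N * s / C))
    (hg : ∀ t ∈ Set.Icc (0 : ℝ) P,
      IsGreatest {v : ℝ | ∃ p : Fin U → ℝ, (∀ m, 0 ≤ p m) ∧ (∑ m, p m = t) ∧
        v = ∑ m, α m * Real.log (1 + c m * p m)} (g t)) :
    StrictMonoOn f (Set.Icc 0 P) ∧
    StrictAntiOn (fun s => g (P - s)) (Set.Icc 0 P) ∧
    (∀ s ∈ Set.Icc (0 : ℝ) P, ∀ t ∈ Set.Icc (0 : ℝ) P, s ≠ t →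
      ¬(f s ≤ f t ∧ g (P - s) ≤ g (P - t))) := by
  have hk : 0 < 1 - UG / T := sub_pos.mpr ((div_lt_one (hUG.trans hT)).mpr hT)
  have hf_mono : StrictMonoOn f (Set.Icc 0 P) := by
    rw [funext hf]
    exact (strictMonoOn_mul_logb_one_add_mul_div one_lt_two hk hN hC).mono Set.Icc_subset_Ici_self
  have hg_anti : StrictAntiOn (fun s => g (P - s)) (Set.Icc 0 P) :=
    (strictMonoOn_of_isGreatest_weightedLogRates hα hc hg).comp_strictAntiOn
      (fun _ _ _ _ h => by linarith) fun s hs => ⟨by linarith [hs.2], by linarith [hs.1]⟩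
  exact ⟨hf_mono, hg_anti, fun s hs t ht hst =>
    not_le_and_le_of_strictMonoOn_of_strictAntiOn hf_mono hg_anti hs ht hst⟩

/-- The parametrized Pareto curve `s ↦ (f s, g (P-s))` with `f` the closed-form
multicast objective and `g` the optimal unicast value function: `f` is strictly
increasing, `s ↦ g (P-s)` is strictly decreasing on `[0,P]`, and no two distinct
points on the curve dominate each other componentwise. -/
theorem stmt14 {U : ℕ} (hU : 1 ≤ U) (N C T UG P : ℝ) (α c : Fin U → ℝ)
    (hN : 0 < N) (hC : 0 < C) (hUG : 0 < UG) (hT : UG < T) (hP : 0 < P)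
    (hα : ∀ m, 0 < α m) (hc : ∀ m, 0 < c m)
    (f g : ℝ → ℝ)
    (hf : ∀ s, f s = (1 - UG / T) * Real.logb 2 (1 + N * s / C))
    (hg : ∀ t ∈ Set.Icc (0 : ℝ) P,
      IsGreatest {v : ℝ | ∃ p : Fin U → ℝ, (∀ m, 0 ≤ p m) ∧ (∑ m, p m = t) ∧
        v = ∑ m, α m * Real.log (1 + c m * p m)} (g t)) :
    StrictMonoOn f (Set.Icc 0 P) ∧
    StrictAntiOn (fun s => g (P - s)) (Set.Icc 0 P) ∧
    (∀ s ∈ Set.Icc (0 : ℝ) P, ∀ t ∈ Set.Icc (0 : ℝ) P, s ≠ t →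
      ¬(f s ≤ f t ∧ g (P - s) ≤ g (P - t))) :=
  stmt14_general N C T UG P α c hN hC hUG hT hα hc f g hf hg
end
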